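/- arXiv:1808.09230 — 2 statements merged into one kernel-verified Lean document; each statement's English description precedes it below -/
import Mathlib

section
/- For every l ∈ ℕ there exist a monotone increasing function c : ℕ → ℕ and a strictly increasing sequence of positive integers (x_i)_{i=1}^∞ such that for every h ∈ ℕ, setting S_h = ∪_{i=1}^{h} [x_i, x_i + 2l], one has: x ≤ c(h) for all x ∈ S_h, and gcd(x, y) ∈ T(l) for all distinct x, y ∈ S_h. -/
/-!
A positive `d` lies in `T(l)` as soon as no prime power `p ^ (r(p,l) + 1)` divides it; each such
prime power exceeds `2l + 1`. Two distinct numbers in one block differ by at most `2l`, so their gcd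
is at most `2l`. For different blocks, the later block starts at `1` plus a multiple of every
`p ^ (r(p,l) + 1)` with `p` up to the end of the earlier blocks, so such a prime power dividing
both numbers would divide some `s ∈ [1, 2l + 1]`, which is impossible.
-/

/-- `r(p,l)`: the largest `t` with `p ^ t ≤ 2 * l + 1`. -/
def rpl (p l : ℕ) : ℕ := Nat.findGreatest (fun t => p ^ t ≤ 2 * l + 1) (2 * l + 1)

/-- `T(l)`: products `∏_{p prime, p ≤ 2l+1} p ^ (r_p)` with `0 ≤ r_p ≤ r(p,l)`. -/
def Tset (l : ℕ) : Set ℕ :=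
  {m | ∃ r : ℕ → ℕ, (∀ p, r p ≤ rpl p l) ∧
    m = ∏ p ∈ (Finset.range (2 * l + 2)).filter Nat.Prime, p ^ r p}

lemma lt_pow_rpl_succ {p : ℕ} (hp : 1 < p) (l : ℕ) : 2 * l + 1 < p ^ (rpl p l + 1) := by
  by_contra! hle
  have hlt : rpl p l + 1 < p ^ (rpl p l + 1) := Nat.lt_pow_self hp
  exact Nat.findGreatest_is_greatest (Nat.lt_succ_self _) (hlt.le.trans hle) hle

lemma rpl_eq_zero_of_lt {p l : ℕ} (h : 2 * l + 1 < p) : rpl p l = 0 := by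
  rw [rpl, Nat.findGreatest_eq_zero_iff]
  intro n hn _ hle
  have : p ≤ p ^ n := Nat.le_self_pow hn.ne' p
  omega

lemma mem_Tset_of_forall_not_dvd {l d : ℕ} (hd : 0 < d)
    (h : ∀ p, p.Prime → ¬ p ^ (rpl p l + 1) ∣ d) : d ∈ Tset l := by
  have hfac : ∀ p, d.factorization p ≤ rpl p l := by
    intro p
    by_cases hp : p.Prime
    · by_contra! hlt
      exact h p hp ((hp.pow_dvd_iff_le_factorization hd.ne').2 hlt)
    · simp [Nat.factorization_eq_zero_of_not_prime d hp]
  refine ⟨d.factorization, hfac, ?_⟩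
  have hsupp : d.factorization.support ⊆ (Finset.range (2 * l + 2)).filter Nat.Prime := by
    intro p hp
    have hpos : 0 < d.factorization p := Nat.pos_of_ne_zero (Finsupp.mem_support_iff.mp hp)
    refine Finset.mem_filter.2 ⟨Finset.mem_range.2 ?_, Nat.prime_of_mem_primeFactors hp⟩
    by_contra! hbig
    have := hfac p
    rw [rpl_eq_zero_of_lt (by omega)] at this
    omega
  calc d = d.factorization.prod (· ^ ·) := (Nat.prod_factorization_pow_eq_self hd.ne').symm
    _ = _ := Finsupp.prod_of_support_subset _ hsupp _ (fun p _ => pow_zero p)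

lemma mem_Tset_of_pos_of_le {l d : ℕ} (hd : 0 < d) (hdl : d ≤ 2 * l + 1) : d ∈ Tset l := by
  refine mem_Tset_of_forall_not_dvd hd fun p hp hdvd => ?_
  have := Nat.le_of_dvd hd hdvd
  have := lt_pow_rpl_succ hp.one_lt l
  omega

lemma gcd_mem_Tset_of_lt_of_le_add {l a b : ℕ} (hab : a < b) (hb : b ≤ a + 2 * l) :
    Nat.gcd a b ∈ Tset l := by
  have hdvd : Nat.gcd a b ∣ b - a := Nat.dvd_sub (Nat.gcd_dvd_right a b) (Nat.gcd_dvd_left a b)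
  have := Nat.le_of_dvd (by omega) hdvd
  exact mem_Tset_of_pos_of_le (Nat.gcd_pos_of_pos_right _ (by omega)) (by omega)

def blockModulus (l N : ℕ) : ℕ :=
  ∏ p ∈ (Finset.range (N + 1)).filter Nat.Prime, p ^ (rpl p l + 1)

lemma blockModulus_pos (l N : ℕ) : 0 < blockModulus l N :=
  Finset.prod_pos fun _ hp => pow_pos (Finset.mem_filter.1 hp).2.pos _

lemma pow_rpl_succ_dvd_blockModulus {p l N : ℕ} (hp : p.Prime) (hpN : p ≤ N) :
    p ^ (rpl p l + 1) ∣ blockModulus l N :=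
  Finset.dvd_prod_of_mem _ (Finset.mem_filter.2 ⟨Finset.mem_range.2 (by omega), hp⟩)

lemma gcd_blockModulus_mul_add_mem_Tset {l a N s : ℕ} (k : ℕ) (ha : 0 < a) (haN : a ≤ N)
    (hs : 0 < s) (hsl : s ≤ 2 * l + 1) : Nat.gcd a (blockModulus l N * k + s) ∈ Tset l := by
  refine mem_Tset_of_forall_not_dvd (Nat.gcd_pos_of_pos_left _ ha) fun p hp hdvd => ?_
  have hqa := hdvd.trans (Nat.gcd_dvd_left _ _)
  have hqb := hdvd.trans (Nat.gcd_dvd_right _ _)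
  have hpq : p ≤ p ^ (rpl p l + 1) := Nat.le_self_pow (Nat.succ_ne_zero _) p
  have hqa' := Nat.le_of_dvd ha hqa
  have hqs : p ^ (rpl p l + 1) ∣ s :=
    (Nat.dvd_add_right ((pow_rpl_succ_dvd_blockModulus hp (by omega)).mul_right k)).1 hqb
  have := Nat.le_of_dvd hs hqs
  have := lt_pow_rpl_succ hp.one_lt l
  omega

/-- The factor `blockStart l h + 1` only serves to make the sequence strictly increasing. -/
def blockStart (l : ℕ) : ℕ → ℕ
  | 0 => 1
  | h + 1 => blockModulus l (blockStart l h + 2 * l) * (blockStart l h + 1) + 1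

lemma blockStart_pos (l h : ℕ) : 0 < blockStart l h := by
  cases h <;> simp [blockStart]

lemma blockStart_strictMono (l : ℕ) : StrictMono (blockStart l) := by
  refine strictMono_nat_of_lt_succ fun h => ?_
  have := Nat.le_mul_of_pos_left (blockStart l h + 1) (blockModulus_pos l (blockStart l h + 2 * l))
  simp only [blockStart]
  omega

lemma gcd_mem_Tset_of_mem_blocks_of_lt {l i j a b : ℕ} (hij : i < j)
    (ha : a ∈ Set.Icc (blockStart l i) (blockStart l i + 2 * l))
    (hb : b ∈ Set.Icc (blockStart l j) (blockStart l j + 2 * l)) : Nat.gcd a b ∈ Tset l := by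
  obtain ⟨j, rfl⟩ : ∃ j', j = j' + 1 := ⟨j - 1, by omega⟩
  have hmono := (blockStart_strictMono l).monotone (Nat.le_of_lt_succ hij)
  have hi := blockStart_pos l i
  set N := blockStart l j + 2 * l
  set k := blockStart l j + 1
  have hstart : blockStart l (j + 1) = blockModulus l N * k + 1 := rfl
  obtain ⟨ha₁, ha₂⟩ := ha
  obtain ⟨hb₁, hb₂⟩ := hb
  rw [hstart] at hb₁ hb₂
  have hb : b = blockModulus l N * k + (b - blockModulus l N * k) := by omega
  rw [hb]
  exact gcd_blockModulus_mul_add_mem_Tset k (by omega) (by omega) (by omega) (by omega)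

lemma gcd_mem_Tset_of_mem_blocks {l i j a b : ℕ}
    (ha : a ∈ Set.Icc (blockStart l i) (blockStart l i + 2 * l))
    (hb : b ∈ Set.Icc (blockStart l j) (blockStart l j + 2 * l)) (hab : a ≠ b) :
    Nat.gcd a b ∈ Tset l := by
  rcases Nat.lt_trichotomy i j with hij | rfl | hji
  · exact gcd_mem_Tset_of_mem_blocks_of_lt hij ha hb
  · rcases Nat.lt_or_gt_of_ne hab with hlt | hgt
    · exact gcd_mem_Tset_of_lt_of_le_add hlt (by grind)
    · rw [Nat.gcd_comm]
      exact gcd_mem_Tset_of_lt_of_le_add hgt (by grind)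
  · rw [Nat.gcd_comm]
    exact gcd_mem_Tset_of_mem_blocks_of_lt hji hb ha

theorem gcd_in_Tl_blocks_general (l : ℕ) :
    ∃ c : ℕ → ℕ, Monotone c ∧ ∃ x : ℕ → ℕ, StrictMono x ∧ (∀ i, 0 < x i) ∧
      ∀ h : ℕ, 0 < h →
        (∀ a ∈ ⋃ i ∈ Finset.range h, Set.Icc (x i) (x i + 2 * l), a ≤ c h) ∧
        (∀ a ∈ ⋃ i ∈ Finset.range h, Set.Icc (x i) (x i + 2 * l),
         ∀ b ∈ ⋃ i ∈ Finset.range h, Set.Icc (x i) (x i + 2 * l),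
            a ≠ b → Nat.gcd a b ∈ Tset l) := by
  have hmono := (blockStart_strictMono l).monotone
  refine ⟨fun h => blockStart l h + 2 * l, fun m n hmn => Nat.add_le_add_right (hmono hmn) _,
    blockStart l, blockStart_strictMono l, blockStart_pos l, fun h _ => ⟨?_, ?_⟩⟩
  · intro a ha
    simp only [Set.mem_iUnion, Finset.mem_range] at ha
    obtain ⟨i, hi, ha₁, ha₂⟩ := ha
    have := hmono hi.le
    show a ≤ blockStart l h + 2 * l
    omega
  · intro a ha b hb hab
    simp only [Set.mem_iUnion] at ha hb
    obtain ⟨i, -, ha⟩ := ha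
    obtain ⟨j, -, hb⟩ := hb
    exact gcd_mem_Tset_of_mem_blocks ha hb hab

/-- there are an increasing `c : ℕ → ℕ` and a strictly increasing
sequence `(x_i)` of positive integers such that, with
`S_h = ∪_{i=1}^h [x_i, x_i + 2l]`, every element of `S_h` is at most `c h` and
the gcd of any two distinct elements of `S_h` lies in `T(l)`. -/
theorem gcd_in_Tl_blocks (l : ℕ) (hl : 0 < l) :
    ∃ c : ℕ → ℕ, Monotone c ∧ ∃ x : ℕ → ℕ, StrictMono x ∧ (∀ i, 0 < x i) ∧
      ∀ h : ℕ, 0 < h →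
        (∀ a ∈ ⋃ i ∈ Finset.range h, Set.Icc (x i) (x i + 2 * l), a ≤ c h) ∧
        (∀ a ∈ ⋃ i ∈ Finset.range h, Set.Icc (x i) (x i + 2 * l),
         ∀ b ∈ ⋃ i ∈ Finset.range h, Set.Icc (x i) (x i + 2 * l),
            a ≠ b → Nat.gcd a b ∈ Tset l) :=
  gcd_in_Tl_blocks_general l
end

section
/- Let l, n ∈ ℕ, let (a_i)_{i=1}^{n} be a sequence in ℕ ∪ {0}, let (u_i)_{i=1}^{n} be a sequence in T(l), and let X = {x_1, x_2, ..., x_n} be a pairwise prime subset of ℕ. Then there exist z ∈ ℕ, a sequence (r_i)_{i=1}^{n} of integers in [0, C(l)], and a sequence (t_i)_{i=1}^{n} in ℕ such that z + r_i = a_i + t_i·x_i·u_i for all i ∈ [1, n]. -/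
/-!
Every `u ∈ T(l)` divides `M := ∏_{p ≤ 2l+1} p ^ r(p,l)`, and `M ≤ C(l)`. Solve the
congruences `z + r_i ≡ a_i (mod x_i u_i)` one index at a time: the solutions of the first
congruences form a class modulo `L = (∏ x_k) M`, and since `x_j u_j ∣ x_j M` with `x_j` coprime
to `∏ x_k`, we get `gcd(L, x_j u_j) ∣ M`. So the next congruence becomes solvable after choosing
the slack `r_j < gcd(L, x_j u_j) ≤ C(l)`. Finally shift `z` by a multiple of `∏ x_i u_i` to make
it large, which makes every quotient `t_i` positive.
-/

open Finset

/-- `C(l) = (2l+1)^(2l+1)`. -/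
def Cbound (l : ℕ) : ℕ := (2 * l + 1) ^ (2 * l + 1)

theorem Int.exists_modEq_and_modEq_of_modEq_gcd {a b n m : ℤ} (h : a ≡ b [ZMOD n.gcd m]) :
    ∃ k, k ≡ a [ZMOD n] ∧ k ≡ b [ZMOD m] := by
  obtain ⟨q, hq⟩ := Int.modEq_iff_dvd.mp h
  have hbez := Int.gcd_eq_gcd_ab n m
  refine ⟨a + n * (n.gcdA m * q), Int.modEq_add_fac_self, ?_⟩
  rw [Int.modEq_iff_dvd]
  exact ⟨n.gcdB m * q, by linear_combination hq + q * hbez⟩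

theorem Int.exists_lt_add_modEq (z c : ℤ) {d : ℕ} (hd : 0 < d) :
    ∃ r < d, z + r ≡ c [ZMOD d] := by
  have hd' : (0 : ℤ) < d := by exact_mod_cast hd
  have hnonneg := Int.emod_nonneg (c - z) hd'.ne'
  have hlt := Int.emod_lt_of_pos (c - z) hd'
  refine ⟨((c - z) % d).toNat, by omega, ?_⟩
  rw [Int.toNat_of_nonneg hnonneg]
  simpa using (Int.mod_modEq (c - z) d).add_left z

theorem Int.exists_natCast_modEq_gt (z : ℤ) {P : ℕ} (hP : 0 < P) (B : ℕ) :
    ∃ z' : ℕ, B < z' ∧ (z' : ℤ) ≡ z [ZMOD P] := by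
  have hP' : (0 : ℤ) < P := by exact_mod_cast hP
  have hnonneg := Int.emod_nonneg z hP'.ne'
  have hlarge : ((B : ℤ) + 1) ≤ (B + 1) * P := le_mul_of_one_le_right (by positivity) (by omega)
  refine ⟨(z % P + (B + 1) * P).toNat, by omega, ?_⟩
  rw [Int.toNat_of_nonneg (by positivity), Int.add_mul_modulus_modEq_iff]
  exact Int.mod_modEq z P

theorem Nat.exists_pos_eq_add_mul_of_modEq {a b m : ℕ} (h : a ≡ b [MOD m]) (hab : a < b) :
    ∃ t, 0 < t ∧ b = a + t * m := by
  obtain ⟨t, ht⟩ := (Nat.modEq_iff_dvd' hab.le).mp h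
  refine ⟨t, Nat.pos_of_ne_zero ?_, by rw [mul_comm t]; omega⟩
  rintro rfl
  omega

theorem exists_forall_add_modEq_of_dvd_mul {ι : Type*} (x m : ι → ℕ) {M : ℕ} (hM : 0 < M)
    (hcop : Pairwise fun i j => Nat.Coprime (x i) (x j)) (hm : ∀ i, m i ∣ x i * M)
    (c : ι → ℤ) (s : Finset ι) :
    ∃ z : ℤ, ∀ i ∈ s, ∃ r < M, z + r ≡ c i [ZMOD m i] := by
  classical
  induction s using Finset.induction_on with
  | empty => exact ⟨0, by simp⟩
  | @insert j s hj ih =>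
    obtain ⟨z, hz⟩ := ih
    set L := (∏ i ∈ s, x i) * M
    have hcopj : Nat.Coprime (x j) (∏ i ∈ s, x i) :=
      Nat.Coprime.prod_right fun i hi => hcop (ne_of_mem_of_not_mem hi hj).symm
    have hgcd : Nat.gcd L (m j) ∣ M := calc
      Nat.gcd L (m j) ∣ Nat.gcd L (x j * M) := Nat.gcd_dvd_gcd_of_dvd_right _ (hm j)
      _ = M := by rw [Nat.gcd_mul_right, hcopj.symm.gcd_eq_one, one_mul]
    obtain ⟨r, hr, hzr⟩ := Int.exists_lt_add_modEq z (c j) (Nat.pos_of_dvd_of_pos hgcd hM)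
    have hsolvable : z ≡ c j - r [ZMOD (L : ℤ).gcd (m j)] := by
      rw [Int.gcd_natCast_natCast]
      simpa using hzr.sub_right r
    obtain ⟨w, hwz, hwj⟩ := Int.exists_modEq_and_modEq_of_modEq_gcd hsolvable
    refine ⟨w, fun i hi => ?_⟩
    rcases Finset.mem_insert.mp hi with rfl | hi
    · exact ⟨r, hr.trans_le (Nat.le_of_dvd hM hgcd), by simpa using hwj.add_right r⟩
    · obtain ⟨ri, hri, hzi⟩ := hz i hi
      have hmL : (m i : ℤ) ∣ L := Int.natCast_dvd_natCast.mpr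
        ((hm i).trans (mul_dvd_mul_right (Finset.dvd_prod_of_mem x hi) M))
      exact ⟨ri, hri, ((hwz.of_dvd hmL).add_right ri).trans hzi⟩

theorem exists_nat_forall_eq_add_mul_of_modEq {ι : Type*} [Fintype ι] (m a r : ι → ℕ)
    (hm : ∀ i, 0 < m i) {z : ℤ} (hz : ∀ i, z + r i ≡ a i [ZMOD m i]) :
    ∃ z' : ℕ, 0 < z' ∧ ∃ t : ι → ℕ,
      (∀ i, 0 < t i) ∧ ∀ i, z' + r i = a i + t i * m i := by
  obtain ⟨z', hz'a, hz'z⟩ :=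
    Int.exists_natCast_modEq_gt z (Finset.prod_pos fun i _ => hm i) (∑ i, a i)
  have hmod : ∀ i, a i ≡ z' + r i [MOD m i] := fun i => by
    have hdvd : (m i : ℤ) ∣ ((∏ j, m j : ℕ) : ℤ) :=
      Int.natCast_dvd_natCast.mpr (dvd_prod_of_mem m (mem_univ i))
    rw [← Int.natCast_modEq_iff]
    push_cast
    exact (((hz'z.of_dvd hdvd).add_right _).trans (hz i)).symm
  have hlt : ∀ i, a i < z' + r i := fun i =>
    (single_le_sum (fun j _ => Nat.zero_le (a j)) (mem_univ i)).trans_lt (by omega)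
  choose t ht hzt using fun i => Nat.exists_pos_eq_add_mul_of_modEq (hmod i) (hlt i)
  exact ⟨z', by omega, t, ht, hzt⟩

def Tmax (l : ℕ) : ℕ := ∏ p ∈ Nat.primesBelow (2 * l + 2), p ^ rpl p l

theorem Tmax_pos (l : ℕ) : 0 < Tmax l :=
  Finset.prod_pos fun _ hp => pow_pos (Nat.prime_of_mem_primesBelow hp).pos _

theorem dvd_Tmax_of_mem_Tset {l u : ℕ} (hu : u ∈ Tset l) : u ∣ Tmax l := by
  obtain ⟨r, hr, rfl⟩ := hu
  exact Finset.prod_dvd_prod_of_dvd _ _ fun p _ => pow_dvd_pow p (hr p)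

theorem pow_rpl_le (p l : ℕ) : p ^ rpl p l ≤ 2 * l + 1 :=
  Nat.findGreatest_spec (P := fun t => p ^ t ≤ 2 * l + 1) (Nat.zero_le _) (by simp)

theorem Tmax_le_Cbound (l : ℕ) : Tmax l ≤ Cbound l := by
  have hcard : #(Nat.primesBelow (2 * l + 2)) ≤ 2 * l + 1 := by
    rw [Nat.primesBelow_eq_filter_Ico_one]
    exact (Finset.card_filter_le _ _).trans (by simp)
  calc Tmax l ≤ ∏ _p ∈ Nat.primesBelow (2 * l + 2), (2 * l + 1) :=
        Finset.prod_le_prod' fun p _ => pow_rpl_le p l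
    _ = (2 * l + 1) ^ #(Nat.primesBelow (2 * l + 2)) := Finset.prod_const _
    _ ≤ Cbound l := Nat.pow_le_pow_right (by omega) hcard

theorem diophantine_crt_general (l n : ℕ)
    (a u x : Fin n → ℕ) (hu : ∀ i, u i ∈ Tset l)
    (hxpos : ∀ i, 0 < x i)
    (hxcop : ∀ i j, i ≠ j → Nat.Coprime (x i) (x j)) :
    ∃ z : ℕ, 0 < z ∧ ∃ r t : Fin n → ℕ,
      (∀ i, r i ≤ Cbound l) ∧ (∀ i, 0 < t i) ∧
      ∀ i, z + r i = a i + t i * x i * u i := by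
  have hm : ∀ i, x i * u i ∣ x i * Tmax l := fun i =>
    mul_dvd_mul_left _ (dvd_Tmax_of_mem_Tset (hu i))
  have hmpos : ∀ i, 0 < x i * u i := fun i =>
    Nat.mul_pos (hxpos i) (Nat.pos_of_dvd_of_pos (dvd_Tmax_of_mem_Tset (hu i)) (Tmax_pos l))
  obtain ⟨z, hz⟩ := exists_forall_add_modEq_of_dvd_mul x (fun i => x i * u i) (Tmax_pos l)
    (fun i j => hxcop i j) hm (fun i => a i) univ
  choose r hr hzr using fun i => hz i (mem_univ i)
  obtain ⟨z', hz', t, ht, hzt⟩ :=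
    exists_nat_forall_eq_add_mul_of_modEq (fun i => x i * u i) a r hmpos hzr
  refine ⟨z', hz', r, t, fun i => ((hr i).trans_le (Tmax_le_Cbound l)).le, ht, fun i => ?_⟩
  rw [hzt i, mul_assoc]

/-- a Diophantine lemma via CRT. -/
theorem diophantine_crt (l n : ℕ) (hl : 0 < l) (hn : 0 < n)
    (a u x : Fin n → ℕ) (hu : ∀ i, u i ∈ Tset l)
    (hxpos : ∀ i, 0 < x i)
    (hxcop : ∀ i j, i ≠ j → Nat.Coprime (x i) (x j)) :
    ∃ z : ℕ, 0 < z ∧ ∃ r t : Fin n → ℕ,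
      (∀ i, r i ≤ Cbound l) ∧ (∀ i, 0 < t i) ∧
      ∀ i, z + r i = a i + t i * x i * u i :=
  diophantine_crt_general l n a u x hu hxpos hxcop
end
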